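/- arXiv:1609.06788 — 3 statements merged into one kernel-verified Lean document; each statement's English description precedes it below -/
import Mathlib

section
/- Let M be a right R-module with a decomposition M = M₁ ⊕ M₂. If M is a SSP-lifting module satisfying the D2 condition, then M₁ is relatively d-CS-Rickart to M₂. -/
universe u v w

section Defs

variable {S : Type u} [Ring S]

/-- A submodule `A` is a direct summand of `M`. -/
def IsDirectSummand {M : Type v} [AddCommGroup M] [Module S M] (A : Submodule S M) : Prop :=
  ∃ B : Submodule S M, A ⊓ B = ⊥ ∧ A ⊔ B = ⊤

/-- `A` is an essential submodule of `B`. -/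
def IsEssentialIn {M : Type v} [AddCommGroup M] [Module S M] (A B : Submodule S M) : Prop :=
  A ≤ B ∧ ∀ K : Submodule S M, K ≤ B → K ≠ ⊥ → A ⊓ K ≠ ⊥

/-- `A` is essential in some direct summand of `M`. -/
def EssentialInSummand {M : Type v} [AddCommGroup M] [Module S M] (A : Submodule S M) : Prop :=
  ∃ D : Submodule S M, IsDirectSummand D ∧ IsEssentialIn A D

/-- `A` is a small (superfluous) submodule of `M`. -/
def IsSmallSubmodule {M : Type v} [AddCommGroup M] [Module S M] (A : Submodule S M) : Prop :=
  ∀ K : Submodule S M, A ⊔ K = ⊤ → K = ⊤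

/-- `A` lies above the direct summand `D` of `M`, i.e. `D ≤ A` and `A/D` is small in `M/D`. -/
def LiesAbove {M : Type v} [AddCommGroup M] [Module S M] (A D : Submodule S M) : Prop :=
  IsDirectSummand D ∧ D ≤ A ∧ IsSmallSubmodule (Submodule.map D.mkQ A)

/-- `A` lies above some direct summand of `M`. -/
def LiesAboveSummand {M : Type v} [AddCommGroup M] [Module S M] (A : Submodule S M) : Prop :=
  ∃ D : Submodule S M, LiesAbove A D

end Defs

section ModDefs

variable (S : Type u) [Ring S]

/-- SSP: the sum of any two direct summands is a direct summand. -/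
def HasSSP (M : Type v) [AddCommGroup M] [Module S M] : Prop :=
  ∀ A B : Submodule S M, IsDirectSummand A → IsDirectSummand B → IsDirectSummand (A ⊔ B)

/-- SIP: the intersection of any two direct summands is a direct summand. -/
def HasSIP (M : Type v) [AddCommGroup M] [Module S M] : Prop :=
  ∀ A B : Submodule S M, IsDirectSummand A → IsDirectSummand B → IsDirectSummand (A ⊓ B)

/-- SIP-CS: the intersection of any finite family of direct summands is essential in a
direct summand. -/
def IsSIPCS (M : Type v) [AddCommGroup M] [Module S M] : Prop :=
  ∀ (ι : Type) [Fintype ι] (A : ι → Submodule S M),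
    (∀ i, IsDirectSummand (A i)) → EssentialInSummand (⨅ i, A i)

/-- SSP-lifting: if each member of a finite family of submodules lies above a direct summand,
then their sum lies above a direct summand. -/
def IsSSPLifting (M : Type v) [AddCommGroup M] [Module S M] : Prop :=
  ∀ (ι : Type) [Fintype ι] (A : ι → Submodule S M),
    (∀ i, LiesAboveSummand (A i)) → LiesAboveSummand (⨆ i, A i)

/-- C2 condition: every submodule isomorphic to a direct summand is a direct summand. -/
def HasC2 (M : Type v) [AddCommGroup M] [Module S M] : Prop :=
  ∀ A B : Submodule S M, IsDirectSummand B → Nonempty (A ≃ₗ[S] B) → IsDirectSummand A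

/-- C3 condition: the sum of two direct summands with zero intersection is a direct summand. -/
def HasC3 (M : Type v) [AddCommGroup M] [Module S M] : Prop :=
  ∀ A B : Submodule S M, IsDirectSummand A → IsDirectSummand B → A ⊓ B = ⊥ →
    IsDirectSummand (A ⊔ B)

/-- D2 condition: if `M/A` is isomorphic to a direct summand of `M` then `A` is a direct
summand. -/
def HasD2 (M : Type v) [AddCommGroup M] [Module S M] : Prop :=
  ∀ A : Submodule S M, (∃ B : Submodule S M, IsDirectSummand B ∧
    Nonempty ((M ⧸ A) ≃ₗ[S] B)) → IsDirectSummand A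

/-- D3 condition: if two direct summands sum to `M`, their intersection is a direct summand. -/
def IsD3Module (M : Type v) [AddCommGroup M] [Module S M] : Prop :=
  ∀ A B : Submodule S M, IsDirectSummand A → IsDirectSummand B → A ⊔ B = ⊤ →
    IsDirectSummand (A ⊓ B)

/-- `M` is relatively CS-Rickart to `N`. -/
def RelCSRickart (M : Type v) (N : Type w) [AddCommGroup M] [Module S M]
    [AddCommGroup N] [Module S N] : Prop :=
  ∀ φ : M →ₗ[S] N, EssentialInSummand (LinearMap.ker φ)

/-- `M` is relatively d-CS-Rickart to `N`. -/
def RelDCSRickart (M : Type v) (N : Type w) [AddCommGroup M] [Module S M]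
    [AddCommGroup N] [Module S N] : Prop :=
  ∀ φ : N →ₗ[S] M, LiesAboveSummand (LinearMap.range φ)

/-- CS-Rickart module. -/
def IsCSRickart (M : Type v) [AddCommGroup M] [Module S M] : Prop :=
  RelCSRickart S M M

/-- d-CS-Rickart module. -/
def IsDCSRickart (M : Type v) [AddCommGroup M] [Module S M] : Prop :=
  RelDCSRickart S M M

/-- `M` has an `Ω`-cover, where `Ω` is the class of modules satisfying `P`. -/
def HasCover (P : ModuleCat.{v} S → Prop) (M : Type v) [AddCommGroup M] [Module S M] : Prop :=
  ∃ (E : ModuleCat.{v} S) (g : E →ₗ[S] M), P E ∧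
    (∀ (E' : ModuleCat.{v} S), P E' → ∀ g' : E' →ₗ[S] M,
      ∃ h : E' →ₗ[S] E, g ∘ₗ h = g') ∧
    (∀ h : E →ₗ[S] E, g ∘ₗ h = g → Function.Bijective h)

/-- `M` has an `Ω`-envelope, where `Ω` is the class of modules satisfying `P`. -/
def HasEnvelope (P : ModuleCat.{v} S → Prop) (M : Type v) [AddCommGroup M] [Module S M] : Prop :=
  ∃ (E : ModuleCat.{v} S) (g : M →ₗ[S] E), P E ∧
    (∀ (E' : ModuleCat.{v} S), P E' → ∀ g' : M →ₗ[S] E',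
      ∃ h : E →ₗ[S] E', h ∘ₗ g = g') ∧
    (∀ h : E →ₗ[S] E, h ∘ₗ g = g → Function.Bijective h)

/-- `M` is 2-generated. -/
def TwoGenerated (M : Type v) [AddCommGroup M] [Module S M] : Prop :=
  ∃ a b : M, Submodule.span S ({a, b} : Set M) = ⊤

/-- `M` is finitely cogenerated. -/
def FinitelyCogenerated (M : Type v) [AddCommGroup M] [Module S M] : Prop :=
  ∀ 𝒜 : Set (Submodule S M), sInf 𝒜 = ⊥ →
    ∃ ℬ ⊆ 𝒜, ℬ.Finite ∧ sInf ℬ = ⊥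

/-- The socle of `M`: the sum of all simple submodules. -/
def SocleOf (M : Type v) [AddCommGroup M] [Module S M] : Submodule S M :=
  sSup {A : Submodule S M | IsSimpleModule S ↥A}

/-- An indecomposable module: nonzero, and its only direct summands are `0` and itself. -/
def IsIndecomposable (M : Type v) [AddCommGroup M] [Module S M] : Prop :=
  (⊤ : Submodule S M) ≠ ⊥ ∧
    ∀ A : Submodule S M, IsDirectSummand A → A = ⊥ ∨ A = ⊤

end ModDefs

section RingDefs

variable (R : Type u) [Ring R]

/-- The right annihilator of an element of a right `R`-module, as a right ideal of `R`. -/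
def rightAnnihilator {M : Type v} [AddCommGroup M] [Module Rᵐᵒᵖ M] (m : M) :
    Submodule Rᵐᵒᵖ R where
  carrier := {r : R | MulOpposite.op r • m = 0}
  add_mem' := by
    intro a b ha hb
    simp only [Set.mem_setOf_eq] at *
    rw [MulOpposite.op_add, add_smul, ha, hb, add_zero]
  zero_mem' := by simp
  smul_mem' := by
    intro c x hx
    simp only [Set.mem_setOf_eq] at *
    have : MulOpposite.op (c • x) = c * MulOpposite.op x := by
      rw [MulOpposite.smul_eq_mul_unop]
      simp [MulOpposite.op_mul]
    rw [this, mul_smul, hx, smul_zero]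

/-- `M` is a nonsingular right `R`-module. -/
def IsNonsingular (M : Type v) [AddCommGroup M] [Module Rᵐᵒᵖ M] : Prop :=
  ∀ m : M, IsEssentialIn (rightAnnihilator R m) (⊤ : Submodule Rᵐᵒᵖ R) → m = 0

/-- `R` is a right V-ring: every simple right `R`-module is injective. -/
def IsRightVRing : Prop :=
  ∀ (N : Type u) [AddCommGroup N] [Module Rᵐᵒᵖ N],
    IsSimpleModule Rᵐᵒᵖ N → Module.Injective Rᵐᵒᵖ N

/-- `R` is semiregular: `R/J(R)` is von Neumann regular and idempotents lift modulo `J(R)`. -/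
def IsSemiregularRing : Prop :=
  (∀ a : R, ∃ b : R, a - a * b * a ∈ Ideal.jacobson (⊥ : Ideal R) ∧ b = b * a * b) ∧
  (∀ a : R, a * a - a ∈ Ideal.jacobson (⊥ : Ideal R) →
    ∃ e : R, e * e = e ∧ e - a ∈ Ideal.jacobson (⊥ : Ideal R))

end RingDefs

/-! The graph `{(φ b, b)}` of `φ : M₂ → M₁` and `0 × M₂` are direct summands of `M = M₁ × M₂`
whose sum is `Im φ × M₂`, so SSP-lifting puts a direct summand `D ⊕ W = M` under `Im φ × M₂`
with small quotient. Smallness forces `D + (M₁ × 0) = M`, hence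
`M / ((D ∩ (M₁ × 0)) ⊕ W) ≅ D / (D ∩ (M₁ × 0)) ≅ M₂`, and D2 makes `D ∩ (M₁ × 0)` a direct summand
of `M`, hence of `M₁`; `Im φ` lies above it. -/

open Submodule LinearMap

section Submodules

variable {S : Type u} [Ring S] {M : Type v} [AddCommGroup M] [Module S M]
  {N : Type w} [AddCommGroup N] [Module S N]

lemma isDirectSummand_iff_exists_isCompl {A : Submodule S M} :
    IsDirectSummand A ↔ ∃ B, IsCompl A B := by
  simp only [IsDirectSummand, isCompl_iff, disjoint_iff, codisjoint_iff]

lemma IsDirectSummand.of_sup {X W : Submodule S M} (hXW : X ⊓ W = ⊥)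
    (h : IsDirectSummand (X ⊔ W)) : IsDirectSummand X := by
  obtain ⟨V, hV_inf, hV_sup⟩ := h
  refine ⟨W ⊔ V, ?_, by rw [← sup_assoc, hV_sup]⟩
  have hmod : (X ⊔ W) ⊓ (W ⊔ V) = W := by
    rw [inf_comm, sup_inf_assoc_of_le V le_sup_right, inf_comm V, hV_inf, sup_bot_eq]
  rw [eq_bot_iff, ← hXW]
  calc X ⊓ (W ⊔ V) ≤ X ⊓ ((X ⊔ W) ⊓ (W ⊔ V)) :=
        le_inf inf_le_left (inf_le_inf_right _ le_sup_left)
    _ = X ⊓ W := by rw [hmod]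

lemma IsDirectSummand.comap_of_le_range {f : N →ₗ[S] M} (hf : Function.Injective f)
    {X : Submodule S M} (hX : IsDirectSummand X) (hXf : X ≤ range f) :
    IsDirectSummand (X.comap f) := by
  obtain ⟨Y, hXY_inf, hXY_sup⟩ := hX
  refine ⟨Y.comap f, ?_, eq_top_iff.2 fun a _ => ?_⟩
  · rw [← comap_inf, hXY_inf, comap_bot, ker_eq_bot.2 hf]
  · obtain ⟨x, hx, y, hy, hxy⟩ := mem_sup.1 (hXY_sup ▸ mem_top : f a ∈ X ⊔ Y)
    obtain ⟨d, rfl⟩ := hXf hx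
    have hy' : f (a - d) = y := by rw [map_sub, ← hxy, add_sub_cancel_left]
    exact mem_sup.2 ⟨d, hx, a - d, show f (a - d) ∈ Y from hy' ▸ hy, add_sub_cancel d a⟩

lemma isSmallSubmodule_map_mkQ_iff {A D : Submodule S M} :
    IsSmallSubmodule (A.map D.mkQ) ↔ ∀ K : Submodule S M, D ≤ K → A ⊔ K = ⊤ → K = ⊤ := by
  constructor
  · intro hsmall K hDK hAK
    have hmap : A.map D.mkQ ⊔ K.map D.mkQ = ⊤ := by
      rw [← Submodule.map_sup, hAK, Submodule.map_top, range_mkQ]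
    rw [← sup_eq_right.2 hDK, ← comap_map_mkQ, hsmall _ hmap, comap_top]
  · intro h Q hQ
    have hDQ : D ≤ Q.comap D.mkQ := fun x hx => by
      simp [(Quotient.mk_eq_zero D).2 hx]
    have hAQ : A ⊔ Q.comap D.mkQ = ⊤ := by
      have h' := comap_map_mkQ D (A ⊔ Q.comap D.mkQ)
      rwa [Submodule.map_sup, map_comap_eq_of_surjective D.mkQ_surjective, hQ, comap_top,
        sup_eq_right.2 (hDQ.trans le_sup_right), eq_comm] at h'
    rw [← map_comap_eq_of_surjective D.mkQ_surjective Q, h _ hDQ hAQ, Submodule.map_top,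
      range_mkQ]

lemma IsDirectSummand.liesAbove_self {A : Submodule S M} (hA : IsDirectSummand A) :
    LiesAbove A A :=
  ⟨hA, le_rfl, fun K hK => by rwa [mkQ_map_self, bot_sup_eq] at hK⟩

lemma LiesAbove.sup_eq_top {A D K : Submodule S M} (h : LiesAbove A D) (hAK : A ⊔ K = ⊤) :
    D ⊔ K = ⊤ :=
  isSmallSubmodule_map_mkQ_iff.1 h.2.2 _ le_sup_left (by
    rw [← sup_assoc, sup_comm A, sup_eq_right.2 h.2.1, hAK])

lemma IsSSPLifting.liesAboveSummand_sup (h : IsSSPLifting S M) {A B : Submodule S M}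
    (hA : LiesAboveSummand A) (hB : LiesAboveSummand B) : LiesAboveSummand (A ⊔ B) := by
  have := h Bool (fun b => cond b A B) (Bool.forall_bool.2 ⟨hB, hA⟩)
  rwa [iSup_bool_eq] at this

lemma ker_comp_projection {D W : Submodule S M} (hDW : IsCompl D W) (f : M →ₗ[S] N) :
    ker (f ∘ₗ D.projection W hDW) = (D ⊓ ker f) ⊔ W := by
  ext m
  rw [mem_ker, comp_apply]
  constructor
  · intro hm
    exact mem_sup.2 ⟨_, ⟨projection_apply_mem hDW m, hm⟩, _, sub_projection_mem hDW m,
      add_sub_cancel _ m⟩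
  · intro hm
    obtain ⟨x, hx, w, hw, rfl⟩ := mem_sup.1 hm
    rw [map_add, projection_apply_of_mem_left hDW hx.1, projection_apply_of_mem_right hDW hw,
      add_zero]
    exact hx.2

lemma surjective_comp_projection {D W : Submodule S M} (hDW : IsCompl D W) {f : M →ₗ[S] N}
    (hf : Function.Surjective f) (hD : D ⊔ ker f = ⊤) :
    Function.Surjective (f ∘ₗ D.projection W hDW) := by
  rwa [← range_eq_top, range_comp, range_projection, map_eq_top_iff (range_eq_top.2 hf)]

lemma HasD2.isDirectSummand_inf_ker (hd2 : HasD2 S M) {D W : Submodule S M}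
    (hDW : IsCompl D W) {f : M →ₗ[S] N} (hf : Function.Surjective f) (hD : D ⊔ ker f = ⊤)
    {B : Submodule S M} (hB : IsDirectSummand B) (e : N ≃ₗ[S] B) :
    IsDirectSummand (D ⊓ ker f) := by
  refine IsDirectSummand.of_sup (W := W) (eq_bot_iff.2 ?_) (hd2 _ ⟨B, hB, ⟨?_⟩⟩)
  · exact hDW.disjoint.eq_bot ▸ inf_le_inf_right W inf_le_left
  · exact (quotEquivOfEq _ _ (ker_comp_projection hDW f).symm).trans
      ((quotKerEquivOfSurjective _ (surjective_comp_projection hDW hf hD)).trans e)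

lemma Submodule.eq_top_of_range_le_sup_map {f : N →ₗ[S] M} {D : Submodule S M}
    {K : Submodule S N} (hDK : range f ≤ D ⊔ K.map f) (hK : D.comap f ≤ K) : K = ⊤ := by
  refine eq_top_iff.2 fun a _ => ?_
  obtain ⟨d, hd, _, ⟨k, hk, rfl⟩, hdk⟩ := mem_sup.1 (hDK (mem_range_self f a))
  have had : a - k ∈ D.comap f := by
    rw [mem_comap, map_sub, ← hdk, add_sub_cancel_right]
    exact hd
  simpa using add_mem (hK had) hk

end Submodules

section Prod

variable {S : Type u} [Ring S] {M₁ : Type v} {M₂ : Type w} [AddCommGroup M₁] [Module S M₁]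
  [AddCommGroup M₂] [Module S M₂]

lemma isDirectSummand_range_inr : IsDirectSummand (range (inr S M₁ M₂)) :=
  isDirectSummand_iff_exists_isCompl.2 ⟨_, isCompl_range_inl_inr.symm⟩

lemma isDirectSummand_range_prod_id (φ : M₂ →ₗ[S] M₁) : IsDirectSummand (range (φ.prod id)) := by
  refine ⟨range (inl S M₁ M₂), eq_bot_iff.2 ?_, eq_top_iff.2 fun x _ => ?_⟩
  · rintro _ ⟨⟨b, rfl⟩, ⟨a, hab⟩⟩
    obtain rfl : b = 0 := (congrArg Prod.snd hab).symm
    simp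
  · refine mem_sup.2 ⟨_, mem_range_self _ x.2, _, mem_range_self _ (x.1 - φ x.2), ?_⟩
    ext <;> simp

lemma range_prod_id_sup_range_inr (φ : M₂ →ₗ[S] M₁) :
    range (φ.prod id) ⊔ range (inr S M₁ M₂) = (range φ).prod ⊤ := by
  refine le_antisymm (sup_le ?_ ?_) fun x hx => ?_
  · rintro _ ⟨b, rfl⟩
    exact ⟨mem_range_self φ b, mem_top⟩
  · rintro _ ⟨b, rfl⟩
    exact ⟨zero_mem _, mem_top⟩
  · obtain ⟨b, hb⟩ := hx.1
    exact mem_sup.2 ⟨_, mem_range_self _ b, _, mem_range_self _ (x.2 - b), by ext <;> simp [hb]⟩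

lemma prod_top_sup_map_inl {A K : Submodule S M₁} (h : A ⊔ K = ⊤) :
    A.prod (⊤ : Submodule S M₂) ⊔ K.map (inl S M₁ M₂) = ⊤ := by
  rw [map_inl, prod_sup_prod, h, sup_bot_eq, prod_top]

end Prod

/-- if `M = M₁ ⊕ M₂` is a SSP-lifting module with the D2 condition, then `M₁` is
relatively d-CS-Rickart to `M₂`. -/
theorem statement_12 (R : Type u) [Ring R] (M₁ : Type v) (M₂ : Type v)
    [AddCommGroup M₁] [Module Rᵐᵒᵖ M₁] [AddCommGroup M₂] [Module Rᵐᵒᵖ M₂]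
    (hssp : IsSSPLifting Rᵐᵒᵖ (M₁ × M₂)) (hd2 : HasD2 Rᵐᵒᵖ (M₁ × M₂)) :
    RelDCSRickart Rᵐᵒᵖ M₁ M₂ := by
  intro φ
  obtain ⟨D, hD⟩ : LiesAboveSummand ((range φ).prod (⊤ : Submodule Rᵐᵒᵖ M₂)) := by
    rw [← range_prod_id_sup_range_inr]
    exact hssp.liesAboveSummand_sup ⟨_, (isDirectSummand_range_prod_id φ).liesAbove_self⟩
      ⟨_, isDirectSummand_range_inr.liesAbove_self⟩
  obtain ⟨W, hDW⟩ := isDirectSummand_iff_exists_isCompl.1 hD.1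
  have hD_sup_ker : D ⊔ ker (snd Rᵐᵒᵖ M₁ M₂) = ⊤ := by
    rw [ker_snd, ← Submodule.map_top]
    exact hD.sup_eq_top (prod_top_sup_map_inl (sup_top_eq _))
  have hD_inf_ker : IsDirectSummand (D ⊓ ker (snd Rᵐᵒᵖ M₁ M₂)) :=
    hd2.isDirectSummand_inf_ker hDW snd_surjective hD_sup_ker isDirectSummand_range_inr
      (LinearEquiv.ofInjective _ inr_injective)
  refine ⟨D.comap (inl Rᵐᵒᵖ M₁ M₂), ?_, fun a ha => (hD.2.1 ha).1, ?_⟩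
  · have := hD_inf_ker.comap_of_le_range inl_injective (ker_snd Rᵐᵒᵖ M₁ M₂ ▸ inf_le_right)
    rwa [comap_inf, ← ker_comp, snd_comp_inl, ker_zero, inf_top_eq] at this
  · refine isSmallSubmodule_map_mkQ_iff.2 fun K hDK hK => eq_top_of_range_le_sup_map ?_ hDK
    rw [hD.sup_eq_top (prod_top_sup_map_inl hK)]
    exact le_top
end

section
/- Let M be a SIP-CS right R-module. Then for any decomposition M = M₁ ⊕ M₂ and any homomorphism f: M₁ → M₂, the kernel Ker(f) is essential in a direct summand of M. -/
universe u v w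

/-- if `M` is SIP-CS, then for any decomposition `M = M₁ ⊕ M₂` and any
homomorphism `f : M₁ → M₂`, `Ker f` is essential in a direct summand of `M`. -/
theorem statement_15 (R : Type u) [Ring R] (M : Type v) [AddCommGroup M] [Module Rᵐᵒᵖ M]
    (hM : IsSIPCS Rᵐᵒᵖ M) (M₁ M₂ : Submodule Rᵐᵒᵖ M)
    (hinf : M₁ ⊓ M₂ = ⊥) (hsup : M₁ ⊔ M₂ = ⊤) (f : M₁ →ₗ[Rᵐᵒᵖ] M₂) :
    EssentialInSummand (Submodule.map M₁.subtype (LinearMap.ker f)) := by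

  classical
  -- the graph of f, as a submodule of M
  set g : M₁ →ₗ[Rᵐᵒᵖ] M := M₁.subtype + M₂.subtype.comp f with hg
  set K : Submodule Rᵐᵒᵖ M := LinearMap.range g with hK
  have hgx : ∀ x : M₁, g x = (x : M) + (f x : M) := fun x => rfl
  -- K is a direct summand with complement M₂
  have hKinf : K ⊓ M₂ = ⊥ := by
    rw [eq_bot_iff]
    rintro m ⟨⟨x, rfl⟩, hm2⟩
    have hx1 : (x : M) ∈ M₁ := x.2
    have hx2 : (x : M) ∈ M₂ := by
      have : (x : M) = g x - (f x : M) := by rw [hgx]; abel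
      rw [this]; exact M₂.sub_mem hm2 (f x).2
    have : (x : M) = 0 := by
      have := hinf ▸ (Submodule.mem_inf.mpr ⟨hx1, hx2⟩); simpa using this
    have hx0 : x = 0 := Subtype.ext this
    simp [hgx, hx0]
  have hKsup : K ⊔ M₂ = ⊤ := by
    rw [eq_top_iff]
    intro m _
    have : m ∈ M₁ ⊔ M₂ := hsup ▸ Submodule.mem_top
    obtain ⟨a, ha, b, hb, rfl⟩ := Submodule.mem_sup.mp this
    have : a + b = g ⟨a, ha⟩ + (b - (f ⟨a, ha⟩ : M)) := by rw [hgx]; abel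
    rw [this]
    exact Submodule.add_mem_sup (LinearMap.mem_range_self g _)
      (M₂.sub_mem hb (f ⟨a, ha⟩).2)
  -- key identity: map subtype (ker f) = M₁ ⊓ K
  have hkey : Submodule.map M₁.subtype (LinearMap.ker f) = M₁ ⊓ K := by
    apply le_antisymm
    · rintro m ⟨x, hx, rfl⟩
      refine ⟨x.2, ⟨x, ?_⟩⟩
      rw [hgx, LinearMap.mem_ker.mp hx]
      simp
    · rintro m ⟨hm1, ⟨x, rfl⟩⟩
      have hfx : (f x : M) ∈ M₁ ⊓ M₂ := by
        constructor
        · have : (f x : M) = g x - (x : M) := by rw [hgx]; abel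
          rw [this]; exact M₁.sub_mem hm1 x.2
        · exact (f x).2
      have hfx0 : f x = 0 := Subtype.ext (by have := hinf ▸ hfx; simpa using this)
      refine ⟨x, LinearMap.mem_ker.mpr hfx0, ?_⟩
      rw [hgx, hfx0]; simp
  rw [hkey]
  have := hM Bool (fun b => if b then M₁ else K) (by
    rintro (_|_)
    · exact ⟨M₂, hKinf, hKsup⟩
    · exact ⟨M₂, hinf, hsup⟩)
  simpa [iInf_bool_eq] using this
end

section
/- Let M be an indecomposable right R-module and N a nonsingular right R-module. If M ⊕ N is a SIP-CS module, then every nonzero homomorphism from M to N is a monomorphism. -/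
universe u v w

/-!
Both `M × 0` and the graph of `f` are direct summands of `M ⊕ N` (each with complement `0 × N`),
and their intersection is `ker f × 0`. By SIP-CS it is essential in a direct summand `D`. Since
`N` is nonsingular, a map into `N` that vanishes on an essential submodule of `D` vanishes on
`D`; applied to the second projection this puts `D` inside `M × 0`, so `D = D₀ × 0` with `D₀` a
direct summand of `M`. Indecomposability leaves `D₀ = 0`, forcing `ker f = 0`, or `D₀ = M`,
and then `f ∘ fst` vanishes on `D = M × 0`, i.e. `f = 0`.
-/

section Essential

variable {S : Type u} [Ring S] {X : Type v} {M : Type w} [AddCommGroup X] [Module S X]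
  [AddCommGroup M] [Module S M]

lemma IsEssentialIn.mono {A B C : Submodule S M} (h : IsEssentialIn A C) (hAB : A ≤ B)
    (hBC : B ≤ C) : IsEssentialIn B C :=
  ⟨hBC, fun K hKC hK hBK => h.2 K hKC hK (le_bot_iff.mp (hBK ▸ inf_le_inf_right K hAB))⟩

lemma IsEssentialIn.comap {A D : Submodule S M} (h : IsEssentialIn A D) (g : X →ₗ[S] M) :
    IsEssentialIn (A.comap g) (D.comap g) := by
  refine ⟨Submodule.comap_mono h.1, fun K hKD hK hAK => ?_⟩
  by_cases hgK : K.map g = ⊥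
  · have hKA : K ≤ A.comap g :=
      (LinearMap.le_ker_iff_map.mpr hgK).trans (LinearMap.ker_le_comap g)
    exact hK (inf_eq_right.mpr hKA ▸ hAK)
  · obtain ⟨_, ⟨hxA, k, hk, rfl⟩, hx⟩ :=
      (Submodule.ne_bot_iff _).mp (h.2 _ (Submodule.map_le_iff_le_comap.mpr hKD) hgK)
    have hk0 : k ∈ A.comap g ⊓ K := ⟨hxA, hk⟩
    rw [hAK, Submodule.mem_bot] at hk0
    exact hx (by rw [hk0, map_zero])

end Essential

section Nonsingular

variable {R : Type u} [Ring R] {M : Type v} {N : Type w} [AddCommGroup M] [Module Rᵐᵒᵖ M]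
  [AddCommGroup N] [Module Rᵐᵒᵖ N]

def toSpanSingletonRight (m : M) : R →ₗ[Rᵐᵒᵖ] M where
  toFun r := MulOpposite.op r • m
  map_add' a b := by simp only [MulOpposite.op_add, add_smul]
  map_smul' x r := by
    simp only [MulOpposite.smul_eq_mul_unop, MulOpposite.op_mul, MulOpposite.op_unop,
      RingHom.id_apply, mul_smul]

lemma ker_toSpanSingletonRight (m : M) :
    LinearMap.ker (toSpanSingletonRight (R := R) m) = rightAnnihilator R m :=
  rfl

lemma comp_toSpanSingletonRight (φ : M →ₗ[Rᵐᵒᵖ] N) (m : M) :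
    φ ∘ₗ toSpanSingletonRight (R := R) m = toSpanSingletonRight (φ m) := by
  ext
  exact φ.map_smul _ m

lemma le_ker_of_isEssentialIn (hN : IsNonsingular R N) {A D : Submodule Rᵐᵒᵖ M}
    (hAD : IsEssentialIn A D) {φ : M →ₗ[Rᵐᵒᵖ] N} (hAφ : A ≤ LinearMap.ker φ) :
    D ≤ LinearMap.ker φ := by
  intro d hd
  have hess : IsEssentialIn (A.comap (toSpanSingletonRight d)) ⊤ := by
    have hD : D.comap (toSpanSingletonRight d) = ⊤ := eq_top_iff.mpr fun r _ => D.smul_mem _ hd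
    exact hD ▸ hAD.comap (toSpanSingletonRight d)
  refine hN (φ d) (hess.mono ?_ le_top)
  rw [← ker_toSpanSingletonRight, ← comp_toSpanSingletonRight, LinearMap.ker_comp]
  exact Submodule.comap_mono hAφ

end Nonsingular

section DirectSummand

variable {S : Type u} [Ring S] {M : Type v} {N : Type w} [AddCommGroup M] [Module S M]
  [AddCommGroup N] [Module S N]

lemma isDirectSummand_graph (f : M →ₗ[S] N) : IsDirectSummand (LinearMap.graph f) := by
  refine ⟨LinearMap.range (LinearMap.inr S M N), ?_, ?_⟩
  · rw [eq_bot_iff]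
    rintro _ ⟨hgraph, n, rfl⟩
    simpa [LinearMap.mem_graph_iff] using hgraph
  · rw [eq_top_iff]
    rintro ⟨m, n⟩ -
    exact Submodule.mem_sup.mpr
      ⟨(m, f m), (f.mem_graph_iff _).mpr rfl, (0, n - f m), ⟨n - f m, rfl⟩, by simp⟩

lemma IsDirectSummand.comap_of_le_range_s17 {i : M →ₗ[S] N} (hi : Function.Injective i)
    {D : Submodule S N} (hD : IsDirectSummand D) (hDi : D ≤ LinearMap.range i) :
    IsDirectSummand (D.comap i) := by
  obtain ⟨D', hinf, hsup⟩ := hD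
  refine ⟨D'.comap i, ?_, ?_⟩
  · rw [← Submodule.comap_inf, hinf, Submodule.comap_bot, LinearMap.ker_eq_bot.mpr hi]
  · rw [eq_top_iff]
    intro m _
    obtain ⟨d, hd, d', hd', hdd'⟩ :=
      Submodule.mem_sup.mp (hsup ▸ Submodule.mem_top : i m ∈ D ⊔ D')
    obtain ⟨p, rfl⟩ := hDi hd
    refine Submodule.mem_sup.mpr ⟨p, hd, m - p, ?_, add_sub_cancel _ _⟩
    rwa [Submodule.mem_comap, map_sub, ← hdd', add_sub_cancel_left]

lemma IsSIPCS.essentialInSummand_inf (h : IsSIPCS S M) {A B : Submodule S M}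
    (hA : IsDirectSummand A) (hB : IsDirectSummand B) : EssentialInSummand (A ⊓ B) := by
  have := h Bool (fun b => cond b A B) (Bool.forall_bool.mpr ⟨hB, hA⟩)
  rwa [iInf_bool_eq] at this

end DirectSummand

/-- if `M` is indecomposable, `N` is nonsingular and `M ⊕ N` is SIP-CS, then
every nonzero homomorphism `M → N` is a monomorphism. -/
theorem statement_17 (R : Type u) [Ring R] (M N : Type v)
    [AddCommGroup M] [Module Rᵐᵒᵖ M] [AddCommGroup N] [Module Rᵐᵒᵖ N]
    (hM : IsIndecomposable Rᵐᵒᵖ M) (hN : IsNonsingular R N)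
    (h : IsSIPCS Rᵐᵒᵖ (M × N)) (f : M →ₗ[Rᵐᵒᵖ] N) (hf : f ≠ 0) :
    Function.Injective f := by
  obtain ⟨D, hD, hAD⟩ :=
    h.essentialInSummand_inf (isDirectSummand_graph 0) (isDirectSummand_graph f)
  have hA_snd : (0 : M →ₗ[Rᵐᵒᵖ] N).graph ⊓ f.graph ≤ LinearMap.ker (LinearMap.snd _ M N) :=
    fun x hx => by simpa [LinearMap.mem_graph_iff] using hx.1
  have hA_f : (0 : M →ₗ[Rᵐᵒᵖ] N).graph ⊓ f.graph ≤ LinearMap.ker (f ∘ₗ LinearMap.fst _ M N) :=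
    fun x hx => by
      obtain ⟨h0, hfx⟩ := Submodule.mem_inf.mp hx
      rw [LinearMap.mem_graph_iff] at h0 hfx
      simpa [← hfx] using h0
  have hD_inl : D ≤ LinearMap.range (LinearMap.inl _ M N) :=
    LinearMap.range_inl Rᵐᵒᵖ M N ▸ le_ker_of_isEssentialIn hN hAD hA_snd
  rcases hM.2 _ (hD.comap_of_le_range_s17 LinearMap.inl_injective hD_inl) with hbot | htop
  · rw [← LinearMap.ker_eq_bot, eq_bot_iff, ← hbot]
    intro k hk
    exact hAD.1
      ⟨by simp [LinearMap.mem_graph_iff], by simpa [LinearMap.mem_graph_iff] using hk.symm⟩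
  · refine absurd (LinearMap.ext fun m => ?_) hf
    have hm : LinearMap.inl _ M N m ∈ D := (htop ▸ Submodule.mem_top : m ∈ D.comap _)
    simpa using le_ker_of_isEssentialIn hN hAD hA_f hm
end
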